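/- Let k be a field, α ∈ k, t ∈ ℕ, and z_j = x^{[j]}·exp(α) ∈ Hk for j = 0,1,…,t. Then the Wronskian determinant of z_0,…,z_t, i.e., the determinant of the (t+1)×(t+1) matrix over Hk whose (i,j)-entry is ∂ⁱ(z_j) (0 ≤ i,j ≤ t), equals exp((t+1)·α); in particular this determinant is invertible in Hk, and z_0, z_1, …, z_t are linearly independent over k. -/

import Mathlib

open scoped BigOperators

set_option linter.unusedSectionVars false

/-- The ring of Hurwitz series over `R`: all sequences `ℕ → R`, with termwise addition and
the Hurwitz (binomial-convolution) product. -/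
def HS (R : Type*) : Type _ := ℕ → R

namespace HS

variable {R : Type*} [CommRing R]

instance : AddCommGroup (HS R) := Pi.addCommGroup

instance {S : Type*} [Semiring S] [Module S R] : Module S (HS R) :=
  Pi.module ℕ (fun _ => R) S

@[simp] theorem add_apply (a b : HS R) (n : ℕ) : (a + b) n = a n + b n := rfl
@[simp] theorem zero_apply (n : ℕ) : (0 : HS R) n = 0 := rfl
@[simp] theorem smul_apply {S : Type*} [Semiring S] [Module S R] (c : S) (a : HS R) (n : ℕ) :
    (c • a) n = c • a n := rfl

instance : Mul (HS R) :=
  ⟨fun a b n => ∑ j ∈ Finset.range (n + 1), (n.choose j : R) * a j * b (n - j)⟩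

theorem mul_apply (a b : HS R) (n : ℕ) :
    (a * b) n = ∑ j ∈ Finset.range (n + 1), (n.choose j : R) * a j * b (n - j) := rfl

instance : One (HS R) := ⟨fun n => if n = 0 then 1 else 0⟩

theorem one_apply (n : ℕ) : (1 : HS R) n = if n = 0 then 1 else 0 := rfl

private theorem hmul_comm (a b : HS R) : a * b = b * a := by
  funext n
  rw [mul_apply, mul_apply, ← Finset.sum_range_reflect]
  refine Finset.sum_congr rfl fun j hj => ?_
  have hj' : j ≤ n := Nat.lt_succ_iff.mp (Finset.mem_range.mp hj)
  have h1 : n + 1 - 1 - j = n - j := by omega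
  rw [h1, Nat.choose_symm hj', Nat.sub_sub_self hj']
  ring

private theorem hone_mul (a : HS R) : 1 * a = a := by
  funext n
  rw [mul_apply]
  rw [Finset.sum_eq_single 0]
  · simp [one_apply]
  · intro j hj hj0
    simp [one_apply, hj0]
  · intro h
    exact absurd (Finset.mem_range.mpr (Nat.succ_pos n)) h

private theorem hmul_assoc (a b c : HS R) : a * b * c = a * (b * c) := by
  funext n
  rw [mul_apply, mul_apply]
  simp_rw [mul_apply, Finset.mul_sum]
  simp_rw [Finset.sum_mul]
  rw [Finset.sum_sigma', Finset.sum_sigma']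
  refine Finset.sum_nbij' (fun x => ⟨x.2, x.1 - x.2⟩) (fun x => ⟨x.1 + x.2, x.1⟩)
    ?_ ?_ ?_ ?_ ?_
  · rintro ⟨p, i⟩ h
    simp only [Finset.mem_sigma, Finset.mem_range] at h ⊢
    omega
  · rintro ⟨i, j⟩ h
    simp only [Finset.mem_sigma, Finset.mem_range] at h ⊢
    omega
  · rintro ⟨p, i⟩ h
    simp only [Finset.mem_sigma, Finset.mem_range] at h
    dsimp only
    exact congrArg (fun m => (⟨m, i⟩ : Σ _ : ℕ, ℕ)) (by omega)
  · rintro ⟨i, j⟩ h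
    simp only [Finset.mem_sigma, Finset.mem_range] at h
    dsimp only
    exact congrArg (fun m => (⟨i, m⟩ : Σ _ : ℕ, ℕ)) (by omega)
  · rintro ⟨p, i⟩ h
    simp only [Finset.mem_sigma, Finset.mem_range] at h
    have hip : i ≤ p := by omega
    have hpn : p ≤ n := by omega
    have h2 : n - i - (p - i) = n - p := by omega
    have h3 : (n.choose p : R) * (p.choose i : R)
        = (n.choose i : R) * ((n - i).choose (p - i) : R) := by
      rw [← Nat.cast_mul, ← Nat.cast_mul, Nat.choose_mul (n := n) hip]
    simp only [h2]
    calc ((n.choose p : R) * ((p.choose i : R) * a i * b (p - i)) * c (n - p))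
        = ((n.choose p : R) * (p.choose i : R)) * (a i * b (p - i) * c (n - p)) := by ring
      _ = ((n.choose i : R) * ((n - i).choose (p - i) : R)) * (a i * b (p - i) * c (n - p)) := by
          rw [h3]
      _ = (n.choose i : R) * a i * (((n - i).choose (p - i) : R) * b (p - i) * c (n - p)) := by
          ring

instance : CommRing (HS R) :=
  { (inferInstance : AddCommGroup (HS R)) with
    mul := (· * ·)
    one := (1 : HS R)
    mul_assoc := hmul_assoc
    one_mul := hone_mul
    mul_one := fun a => by rw [hmul_comm]; exact hone_mul a
    left_distrib := fun a b c => by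
      funext n
      simp only [mul_apply, add_apply]
      rw [← Finset.sum_add_distrib]
      exact Finset.sum_congr rfl fun j _ => by ring
    right_distrib := fun a b c => by
      funext n
      simp only [mul_apply, add_apply]
      rw [← Finset.sum_add_distrib]
      exact Finset.sum_congr rfl fun j _ => by ring
    zero_mul := fun a => by funext n; simp [mul_apply]
    mul_zero := fun a => by funext n; simp [mul_apply]
    mul_comm := hmul_comm }

/-- The derivation `∂` on Hurwitz series: the left-shift. -/
def D (a : HS R) : HS R := fun n => a (n + 1)

@[simp] theorem D_apply (a : HS R) (n : ℕ) : D a n = a (n + 1) := rfl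

/-- The exponential `exp β = (1, β, β², …)`. -/
def hexp (b : R) : HS R := fun n => b ^ n

@[simp] theorem hexp_apply (b : R) (n : ℕ) : hexp b n = b ^ n := rfl

/-- The divided power `x^{[i]}`: the sequence with `1` in position `i` and `0` elsewhere. -/
def dpow (i : ℕ) : HS R := fun n => if n = i then 1 else 0

/-- The constant Hurwitz series `(r, 0, 0, …)`. -/
def const (r : R) : HS R := fun n => if n = 0 then r else 0

/-- Entrywise map of a Hurwitz series along a map of coefficients. -/
def map {K L : Type*} (f : K → L) (a : HS K) : HS L := fun n => f (a n)

/-- `σ` is a differential automorphism of the subspace `V` of `HS k`: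
a `k`-linear automorphism of `V` commuting with the derivation `D`. -/
def IsDiffAut {k : Type*} [Field k] (V : Submodule k (HS k)) (σ : V ≃ₗ[k] V) : Prop :=
  ∀ v w : V, (w : HS k) = D (v : HS k) → (σ w : HS k) = D (σ v : HS k)

end HS

/-- The nilpotent upper Jordan block of size `m` (ones on the superdiagonal). -/
def jordanBlock (k : Type*) [Field k] (m : ℕ) : Matrix (Fin m) (Fin m) k :=
  Matrix.of fun i j => if (i : ℕ) + 1 = (j : ℕ) then 1 else 0

/-- The centralizer of a matrix `A` inside `GL(m, k)`, as a set of matrices. -/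
def matCent {k : Type*} [Field k] {m : ℕ} (A : Matrix (Fin m) (Fin m) k) :
    Set (Matrix (Fin m) (Fin m) k) :=
  {T | IsUnit T ∧ A * T = T * A}

/-- The group `U(m, k)` of upper triangular matrices in `GL(m, k)` with all diagonal
entries equal to `1`, as a set of matrices. -/
def uniUpper (k : Type*) [Field k] (m : ℕ) : Set (Matrix (Fin m) (Fin m) k) :=
  {T | IsUnit T ∧ (∀ i, T i i = 1) ∧ ∀ i j : Fin m, (j : ℕ) < (i : ℕ) → T i j = 0}

/-!
By the Leibniz rule (coefficientwise: Vandermonde's identity),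
`∂ⁱ(x^{[j]} exp α) = ∑ₘ C(i,m) α^{i-m} x^{[j-m]} exp α`, so the Wronskian matrix factors as
`P · U` with `P = (C(i,m) α^{i-m})` a lower unitriangular matrix of constants and
`U = (x^{[j-m]} exp α)` upper triangular with diagonal `exp α`. Its determinant is therefore
`(exp α)^{t+1} = exp((t+1)α)`, a unit since `exp(-α)` inverts `exp α`. Linear independence comes
from `P` as well: the entries `0, …, t` of `z_j` form the `j`-th column of `P`.
-/

section BinomialMatrix

variable {R : Type*} [CommRing R]

def binomialMatrix (α : R) (m : ℕ) : Matrix (Fin m) (Fin m) R :=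
  Matrix.of fun i j => ((i : ℕ).choose j : R) * α ^ ((i : ℕ) - j)

theorem det_binomialMatrix (α : R) (m : ℕ) : (binomialMatrix α m).det = 1 := by
  rw [Matrix.det_of_isLowerTriangular _ fun i j (hij : i < j) => by
    simp [binomialMatrix, Nat.choose_eq_zero_of_lt (Fin.lt_def.mp hij)]]
  simp [binomialMatrix]

theorem isUnit_binomialMatrix (α : R) (m : ℕ) : IsUnit (binomialMatrix α m) :=
  (Matrix.isUnit_iff_isUnit_det _).mpr (by rw [det_binomialMatrix]; exact isUnit_one)

theorem add_choose_mul_pow_eq_sum (α : R) (i j n : ℕ) :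
    ((n + i).choose j : R) * α ^ (n + i - j) = ∑ l ∈ Finset.range (j + 1),
      (i.choose l : R) * α ^ (i - l) * ((n.choose (j - l) : R) * α ^ (n - (j - l))) := by
  have term : ∀ l ∈ Finset.range (j + 1),
      (i.choose l : R) * α ^ (i - l) * ((n.choose (j - l) : R) * α ^ (n - (j - l)))
        = (i.choose l * n.choose (j - l) : ℕ) * α ^ (n + i - j) := by
    intro l hl
    have hlj : l ≤ j := Nat.lt_succ_iff.mp (Finset.mem_range.mp hl)
    rcases lt_or_ge i l with hil | hli
    · simp [Nat.choose_eq_zero_of_lt hil]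
    rcases lt_or_ge n (j - l) with hnl | hln
    · simp [Nat.choose_eq_zero_of_lt hnl]
    rw [show n + i - j = (i - l) + (n - (j - l)) by omega, pow_add]
    push_cast
    ring
  rw [Finset.sum_congr rfl term, ← Finset.sum_mul, ← Nat.cast_sum, add_comm n i,
    Nat.add_choose_eq, Finset.Nat.sum_antidiagonal_eq_sum_range_succ_mk]

end BinomialMatrix

namespace HS

variable {R : Type*} [CommRing R]

theorem sum_apply {ι : Type*} (s : Finset ι) (f : ι → HS R) (n : ℕ) :
    (∑ i ∈ s, f i) n = ∑ i ∈ s, f i n :=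
  Finset.sum_apply n s f

theorem iterate_D_apply (a : HS R) (i n : ℕ) : D^[i] a n = a (n + i) := by
  induction i generalizing a with
  | zero => rfl
  | succ i ih => rw [Function.iterate_succ_apply, ih, D_apply]; rfl

theorem const_mul_apply (c : R) (a : HS R) (n : ℕ) : (const c * a) n = c * a n := by
  rw [mul_apply, Finset.sum_eq_single 0]
  · simp [const]
  · intro l _ hl
    simp [const, hl]
  · simp

def constRingHom : R →+* HS R where
  toFun := const
  map_one' := rfl
  map_mul' a b := by
    funext n
    rw [const_mul_apply]
    simp only [const]
    split_ifs <;> simp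
  map_zero' := by
    funext n
    simp [const]
  map_add' a b := by
    funext n
    simp only [const, add_apply]
    split_ifs <;> simp

theorem constRingHom_apply (r : R) : constRingHom r = const r := rfl

theorem dpow_mul_hexp_apply (α : R) (j n : ℕ) :
    (dpow j * hexp α : HS R) n = (n.choose j : R) * α ^ (n - j) := by
  rw [mul_apply, Finset.sum_eq_single j]
  · simp [dpow]
  · intro l _ hl
    simp [dpow, hl]
  · intro hj
    rw [Nat.choose_eq_zero_of_lt (by simpa using hj)]
    simp

theorem hexp_add (a b : R) : hexp (a + b) = hexp a * hexp b := by
  funext n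
  rw [hexp_apply, add_pow, mul_apply]
  refine Finset.sum_congr rfl fun l _ => ?_
  simp only [hexp_apply]
  ring

theorem hexp_zero : hexp (0 : R) = 1 := by
  funext n
  simp [one_apply, zero_pow_eq]

theorem hexp_pow (a : R) (m : ℕ) : hexp a ^ m = hexp (m * a) := by
  induction m with
  | zero => simp [hexp_zero]
  | succ m ih => rw [pow_succ, ih, ← hexp_add]; push_cast; ring_nf

theorem isUnit_hexp (a : R) : IsUnit (hexp a) :=
  .of_mul_eq_one (hexp (-a)) (by rw [← hexp_add, add_neg_cancel, hexp_zero])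

def wronskian {m : ℕ} (f : Fin m → HS R) : Matrix (Fin m) (Fin m) (HS R) :=
  Matrix.of fun i j => D^[i] (f j)

def dpowHexpMatrix (α : R) (m : ℕ) : Matrix (Fin m) (Fin m) (HS R) :=
  Matrix.of fun l j => if l ≤ j then dpow ((j : ℕ) - l) * hexp α else 0

theorem det_dpowHexpMatrix (α : R) (m : ℕ) : (dpowHexpMatrix α m).det = hexp α ^ m := by
  have hU : (dpowHexpMatrix α m).IsUpperTriangular := fun l j (hjl : j < l) =>
    if_neg (not_le.mpr hjl)
  rw [Matrix.det_of_isUpperTriangular hU]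
  simp only [dpowHexpMatrix, Matrix.of_apply, le_refl, if_true, Nat.sub_self]
  rw [show (dpow 0 : HS R) = 1 from rfl, one_mul, Finset.prod_const, Finset.card_univ,
    Fintype.card_fin]

theorem wronskian_dpow_mul_hexp (α : R) (m : ℕ) :
    wronskian (fun j : Fin m => dpow j * hexp α) =
      constRingHom.mapMatrix (binomialMatrix α m) * dpowHexpMatrix α m := by
  ext i j
  funext n
  have hj : (j : ℕ) + 1 ≤ m := j.isLt
  rw [wronskian, Matrix.of_apply, iterate_D_apply, dpow_mul_hexp_apply,
    add_choose_mul_pow_eq_sum, Matrix.mul_apply, sum_apply]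
  set f : ℕ → R := fun l => ((i : ℕ).choose l : R) * α ^ ((i : ℕ) - l) *
    if l ≤ j then (n.choose (j - l) : R) * α ^ (n - (j - l)) else 0
  have entry : ∀ l : Fin m, (constRingHom.mapMatrix (binomialMatrix α m) i l *
      dpowHexpMatrix α m l j) n = f l := by
    intro l
    rw [RingHom.mapMatrix_apply, Matrix.map_apply, constRingHom_apply, const_mul_apply]
    simp only [binomialMatrix, dpowHexpMatrix, Matrix.of_apply, f, Fin.le_def]
    split_ifs <;> simp [dpow_mul_hexp_apply]
  have vanish : ∀ l ∈ Finset.range m, l ∉ Finset.range (j + 1) → f l = 0 := by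
    intro l _ hl
    simp_all [f]
  rw [Finset.sum_congr rfl fun l _ => entry l, Fin.sum_univ_eq_sum_range f m,
    ← Finset.sum_subset (Finset.range_subset_range.mpr hj) vanish]
  refine Finset.sum_congr rfl fun l hl => ?_
  simp only [f]
  rw [if_pos (Nat.lt_succ_iff.mp (Finset.mem_range.mp hl))]

theorem det_wronskian_dpow_mul_hexp (α : R) (m : ℕ) :
    (wronskian fun j : Fin m => dpow j * hexp α).det = hexp ((m : R) * α) := by
  rw [wronskian_dpow_mul_hexp, Matrix.det_mul, ← RingHom.map_det, det_binomialMatrix, map_one,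
    one_mul, det_dpowHexpMatrix, hexp_pow]

theorem linearIndependent_dpow_mul_hexp (α : R) (m : ℕ) :
    LinearIndependent R fun j : Fin m => (dpow j * hexp α : HS R) := by
  rw [Fintype.linearIndependent_iff]
  intro g hg
  have hmulVec : (binomialMatrix α m).mulVec g = 0 := by
    funext n
    have hn := congrFun hg n
    rw [sum_apply] at hn
    simpa [Matrix.mulVec, dotProduct, binomialMatrix, dpow_mul_hexp_apply, mul_comm] using hn
  exact congrFun <| Matrix.mulVec_injective_of_isUnit (isUnit_binomialMatrix α m) <|
    hmulVec.trans (Matrix.mulVec_zero _).symm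

end HS

/-- the Wronskian determinant of `z_j = x^{[j]} exp α`, `j = 0, …, t`, equals
`exp((t+1)α)`; in particular it is invertible in `Hk` and `z₀, …, z_t` are `k`-linearly
independent. -/
theorem stmt_7 {k : Type*} [Field k] (α : k) (t : ℕ)
    (z : Fin (t + 1) → HS k) (hz : ∀ j, z j = HS.dpow (j : ℕ) * HS.hexp α) :
    (Matrix.of fun i j : Fin (t + 1) => HS.D^[(i : ℕ)] (z j)).det
      = HS.hexp (((t + 1 : ℕ) : k) * α) ∧
    IsUnit (Matrix.of fun i j : Fin (t + 1) => HS.D^[(i : ℕ)] (z j)).det ∧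
    LinearIndependent k z := by
  obtain rfl : z = fun j : Fin (t + 1) => (HS.dpow (j : ℕ) * HS.hexp α : HS k) := funext hz
  have hdet := HS.det_wronskian_dpow_mul_hexp α (t + 1)
  exact ⟨hdet, hdet ▸ HS.isUnit_hexp _, HS.linearIndependent_dpow_mul_hexp α (t + 1)⟩
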